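/- For every integer n ≥ 1, every real number t ≠ 0 and all real q, one has Σ_{σ∈S_n(321)} t^{exc σ + fix σ} q^{inv σ} = t^n · Σ_{σ∈S_{n−1}(321)} (q/t)^{exc σ} q^{inv σ} (1 + q/t)^{fix σ}. -/

import Mathlib

open Finset

open scoped Classical

noncomputable section

namespace EulerExc

variable {n : ℕ}

/-- 1-based value of `σ` at position `k ∈ [1,n]`, with boundary convention
`σ(0) = σ(n+1) = 0` outside. -/
def sv (σ : Equiv.Perm (Fin n)) (k : ℕ) : ℕ :=
  if h : 1 ≤ k ∧ k ≤ n then ((σ ⟨k - 1, by omega⟩ : Fin n) : ℕ) + 1 else 0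

/-- 1-based value with boundary convention `σ(0) = 0`, `σ(n+1) = ∞`. -/
def svInf (σ : Equiv.Perm (Fin n)) (k : ℕ) : ℕ :=
  if k = 0 then 0 else if k ≤ n then sv σ k else n + 1

/-- number of excedances -/
def exc (σ : Equiv.Perm (Fin n)) : ℕ := (univ.filter fun i : Fin n => i < σ i).card

/-- number of fixed points -/
def fixc (σ : Equiv.Perm (Fin n)) : ℕ := (univ.filter fun i : Fin n => σ i = i).card

/-- number of drops -/
def dropc (σ : Equiv.Perm (Fin n)) : ℕ := (univ.filter fun i : Fin n => σ i < i).card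

/-- number of inversions -/
def inv (σ : Equiv.Perm (Fin n)) : ℕ :=
  (univ.filter fun p : Fin n × Fin n => p.1 < p.2 ∧ σ p.2 < σ p.1).card

/-- number of descents -/
def des (σ : Equiv.Perm (Fin n)) : ℕ :=
  ((Icc 1 (n - 1)).filter fun i => sv σ (i + 1) < sv σ i).card

/-- number of ascents -/
def asc (σ : Equiv.Perm (Fin n)) : ℕ :=
  ((Icc 1 (n - 1)).filter fun i => sv σ i < sv σ (i + 1)).card

/-- crossing number: pairs `(i,j)` with `j < i < σ(j) < σ(i)` or `σ(i) < σ(j) ≤ i < j` -/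
def cros (σ : Equiv.Perm (Fin n)) : ℕ :=
  (univ.filter fun p : Fin n × Fin n =>
    (p.2 < p.1 ∧ p.1 < σ p.2 ∧ σ p.2 < σ p.1) ∨
    (σ p.1 < σ p.2 ∧ σ p.2 ≤ p.1 ∧ p.1 < p.2)).card

/-- nesting number: pairs `(i,j)` with `j < i < σ(i) < σ(j)` or `σ(j) < σ(i) ≤ i < j` -/
def nest (σ : Equiv.Perm (Fin n)) : ℕ :=
  (univ.filter fun p : Fin n × Fin n =>
    (p.2 < p.1 ∧ p.1 < σ p.1 ∧ σ p.1 < σ p.2) ∨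
    (σ p.2 < σ p.1 ∧ σ p.1 ≤ p.1 ∧ p.1 < p.2)).card

def icr (σ : Equiv.Perm (Fin n)) : ℕ := cros σ⁻¹

/-- number of cyclic peaks -/
def cpk (σ : Equiv.Perm (Fin n)) : ℕ :=
  (univ.filter fun x : Fin n => σ⁻¹ x < x ∧ σ x < x).card

/-- number of cyclic valleys -/
def cval (σ : Equiv.Perm (Fin n)) : ℕ :=
  (univ.filter fun x : Fin n => x < σ⁻¹ x ∧ x < σ x).card

/-- number of double excedances -/
def cda (σ : Equiv.Perm (Fin n)) : ℕ :=
  (univ.filter fun x : Fin n => σ⁻¹ x < x ∧ x < σ x).card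

/-- number of double drops -/
def cdd (σ : Equiv.Perm (Fin n)) : ℕ :=
  (univ.filter fun x : Fin n => x < σ⁻¹ x ∧ σ x < x).card

/-- number of cycles (including fixed points) -/
def cyc (σ : Equiv.Perm (Fin n)) : ℕ := σ.cycleType.card + fixc σ

/-- the star companion `σ*` of `σ`: a permutation of `{0,1,…,n}` with
`σ*(0) = n` and `σ*(i) = σ(i) - 1` for `i ∈ [n]`. -/
def star (σ : Equiv.Perm (Fin n)) : Equiv.Perm (Fin (n + 1)) :=
  (Equiv.Perm.decomposeFin.symm (0, σ)).trans (Equiv.subRight (1 : Fin (n + 1)))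

def cpkStar (σ : Equiv.Perm (Fin n)) : ℕ :=
  (univ.filter fun i : Fin (n + 1) =>
    1 ≤ (i : ℕ) ∧ (i : ℕ) < n ∧ (star σ)⁻¹ i < i ∧ star σ i < i).card

def cdaStar (σ : Equiv.Perm (Fin n)) : ℕ :=
  (univ.filter fun i : Fin (n + 1) =>
    1 ≤ (i : ℕ) ∧ (i : ℕ) < n ∧ (star σ)⁻¹ i < i ∧ i < star σ i).card

def cddStar (σ : Equiv.Perm (Fin n)) : ℕ :=
  (univ.filter fun i : Fin (n + 1) =>
    1 ≤ (i : ℕ) ∧ (i : ℕ) < n ∧ i < (star σ)⁻¹ i ∧ star σ i < i).card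

def fixStar (σ : Equiv.Perm (Fin n)) : ℕ :=
  (univ.filter fun i : Fin (n + 1) =>
    1 ≤ (i : ℕ) ∧ (i : ℕ) < n ∧ star σ i = i).card

def cycStar (σ : Equiv.Perm (Fin n)) : ℕ := cyc (star σ)

/-- number of occurrences of the vincular pattern 31-2 -/
def p31_2 (σ : Equiv.Perm (Fin n)) : ℕ :=
  ((Icc 1 n ×ˢ Icc 1 n).filter fun p =>
    p.1 + 1 < p.2 ∧ sv σ (p.1 + 1) < sv σ p.2 ∧ sv σ p.2 < sv σ p.1).card

/-- number of occurrences of the vincular pattern 2-13 -/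
def p2_13 (σ : Equiv.Perm (Fin n)) : ℕ :=
  ((Icc 1 n ×ˢ Icc 1 n).filter fun p =>
    p.2 < p.1 ∧ p.1 < n ∧ sv σ p.1 < sv σ p.2 ∧ sv σ p.2 < sv σ (p.1 + 1)).card

/-- number of occurrences of the vincular pattern 2-31 -/
def p2_31 (σ : Equiv.Perm (Fin n)) : ℕ :=
  ((Icc 1 n ×ˢ Icc 1 n).filter fun p =>
    p.2 < p.1 ∧ p.1 < n ∧ sv σ (p.1 + 1) < sv σ p.2 ∧ sv σ p.2 < sv σ p.1).card

/-- number of peaks (convention 0--0) -/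
def pk (σ : Equiv.Perm (Fin n)) : ℕ :=
  ((Icc 1 n).filter fun i => sv σ (i - 1) < sv σ i ∧ sv σ (i + 1) < sv σ i).card

/-- number of valleys (convention 0--0) -/
def vall (σ : Equiv.Perm (Fin n)) : ℕ :=
  ((Icc 1 n).filter fun i => sv σ i < sv σ (i - 1) ∧ sv σ i < sv σ (i + 1)).card

/-- number of double ascents (convention 0--0) -/
def da (σ : Equiv.Perm (Fin n)) : ℕ :=
  ((Icc 1 n).filter fun i => sv σ (i - 1) < sv σ i ∧ sv σ i < sv σ (i + 1)).card

/-- number of double descents (convention 0--0) -/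
def dd (σ : Equiv.Perm (Fin n)) : ℕ :=
  ((Icc 1 n).filter fun i => sv σ i < sv σ (i - 1) ∧ sv σ (i + 1) < sv σ i).card

/-- number of peaks (convention 0--∞) -/
def lpk (σ : Equiv.Perm (Fin n)) : ℕ :=
  ((Icc 1 n).filter fun i => svInf σ (i - 1) < svInf σ i ∧ svInf σ (i + 1) < svInf σ i).card

/-- number of valleys (convention 0--∞) -/
def lval (σ : Equiv.Perm (Fin n)) : ℕ :=
  ((Icc 1 n).filter fun i => svInf σ i < svInf σ (i - 1) ∧ svInf σ i < svInf σ (i + 1)).card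

/-- number of double ascents (convention 0--∞) -/
def lda (σ : Equiv.Perm (Fin n)) : ℕ :=
  ((Icc 1 n).filter fun i => svInf σ (i - 1) < svInf σ i ∧ svInf σ i < svInf σ (i + 1)).card

/-- number of double descents (convention 0--∞) -/
def ldd (σ : Equiv.Perm (Fin n)) : ℕ :=
  ((Icc 1 n).filter fun i => svInf σ i < svInf σ (i - 1) ∧ svInf σ (i + 1) < svInf σ i).card

/-- number of foremaxima: double ascents (convention 0--∞) that are
left-to-right maxima -/
def fmax (σ : Equiv.Perm (Fin n)) : ℕ :=
  ((Icc 1 n).filter fun i =>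
    svInf σ (i - 1) < svInf σ i ∧ svInf σ i < svInf σ (i + 1) ∧
    ∀ j ∈ Icc 1 i, sv σ j ≤ sv σ i).card

/-- `scda σ = #{i ∈ [n-1] : i < σ(i) and i+1 > σ⁻¹(i+1)}` -/
def scda (σ : Equiv.Perm (Fin n)) : ℕ :=
  ((Icc 1 (n - 1)).filter fun i => i < sv σ i ∧ sv σ⁻¹ (i + 1) < i + 1).card

/-- `σ` avoids the pattern 321 -/
def Avoids321 (σ : Equiv.Perm (Fin n)) : Prop :=
  ¬ ∃ i j k : Fin n, i < j ∧ j < k ∧ σ k < σ j ∧ σ j < σ i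

/-- `σ` avoids the pattern 231 -/
def Avoids231 (σ : Equiv.Perm (Fin n)) : Prop :=
  ¬ ∃ i j k : Fin n, i < j ∧ j < k ∧ σ k < σ i ∧ σ i < σ j

/-- `σ` avoids the pattern 312 -/
def Avoids312 (σ : Equiv.Perm (Fin n)) : Prop :=
  ¬ ∃ i j k : Fin n, i < j ∧ j < k ∧ σ j < σ k ∧ σ k < σ i

/-- `σ` avoids the pattern 213 -/
def Avoids213 (σ : Equiv.Perm (Fin n)) : Prop :=
  ¬ ∃ i j k : Fin n, i < j ∧ j < k ∧ σ j < σ i ∧ σ i < σ k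

/-- `σ` avoids the pattern 132 -/
def Avoids132 (σ : Equiv.Perm (Fin n)) : Prop :=
  ¬ ∃ i j k : Fin n, i < j ∧ j < k ∧ σ i < σ k ∧ σ k < σ j

/-- `σ` is a derangement -/
def IsDerangement (σ : Equiv.Perm (Fin n)) : Prop := ∀ i, σ i ≠ i

/-! Signed permutations `B_n`, encoded as a pair `(σ, ε)` of an ordinary
permutation (the absolute value) together with signs attached to positions. -/

/-- number of negative values -/
def negB (ε : Fin n → Bool) : ℕ := (univ.filter fun i => ε i = true).card

/-- number of type B excedances, w.r.t. the friends order -/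
def excB (σ : Equiv.Perm (Fin n)) (ε : Fin n → Bool) : ℕ :=
  (univ.filter fun i : Fin n => i < σ i ∨ (σ i = i ∧ ε i = true)).card

/-- the (1-based, signed, integer) value of the signed permutation `(σ, ε)` at
position `k ∈ [1,n]`, with `0` outside. -/
def signedVal (σ : Equiv.Perm (Fin n)) (ε : Fin n → Bool) (k : ℕ) : ℤ :=
  if h : 1 ≤ k ∧ k ≤ n then
    (if ε ⟨k - 1, by omega⟩ then -(((σ ⟨k - 1, by omega⟩ : Fin n) : ℕ) + 1 : ℤ)
     else (((σ ⟨k - 1, by omega⟩ : Fin n) : ℕ) + 1 : ℤ))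
  else 0

/-- number of type B descents -/
def desB (σ : Equiv.Perm (Fin n)) (ε : Fin n → Bool) : ℕ :=
  ((range n).filter fun i => signedVal σ ε (i + 1) < signedVal σ ε i).card

/-!
A 321-avoiding permutation is increasing both on its drops `{i | σ i < i}` and on its weak
excedances. Hence it is determined by its drop pairs `(i, σ i)`, which form the graph of a strictly
increasing partial map below the diagonal, and every such "drop chain" arises by filling the other
positions increasingly. Moreover `inv σ = ∑ (i - σ i)` over the drops, so the left side is the sum
of `t ^ (n - #d) * q ^ ∑ (i - j)` over the drop chains `d` of `[n]`.

On the right, `σ ↦ σ⁻¹` turns excedances into drops, and expanding `(1 + q / t) ^ fix` over sets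
`S` of fixed points leads to pairs `(σ, S)`, encoded by the weak drop chains
`{(i, σ i) | σ i < i ∨ i ∈ S}` of `[n - 1]` (the same filling argument makes this bijective).
Finally `(i, j) ↦ (i + 1, j)` maps the weak drop chains of `[n - 1]` onto the drop chains of `[n]`,
raising every `i - j` by one, which absorbs the powers of `q / t`.
-/

open Equiv

def equivImageOfInjOn {α β : Type*} [DecidableEq β] (s : Finset α) (f : α → β)
    (hf : Set.InjOn f s) : s ≃ {b // b ∈ s.image f} :=
  Equiv.ofBijective (fun x => ⟨f x, mem_image_of_mem f x.2⟩)
    ⟨fun x y h => Subtype.ext (hf x.2 y.2 (congrArg Subtype.val h)), fun ⟨_, hb⟩ =>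
      let ⟨x, hx, hxb⟩ := mem_image.1 hb
      ⟨⟨x, hx⟩, Subtype.ext hxb⟩⟩

lemma eqOn_of_strictMonoOn {α β : Type*} [LinearOrder α] [LinearOrder β] {f g : α → β}
    {s : Finset α} {t : Finset β} (hst : #s = #t) (hf : StrictMonoOn f s)
    (hg : StrictMonoOn g s) (hfs : Set.MapsTo f s t) (hgs : Set.MapsTo g s t) :
    Set.EqOn f g s := by
  have comp_enum : ∀ φ : α → β, StrictMonoOn φ s → Set.MapsTo φ s t →
      φ ∘ s.orderEmbOfFin rfl = t.orderEmbOfFin hst.symm := fun φ hφ hφs =>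
    orderEmbOfFin_unique _ (fun j => hφs (s.orderEmbOfFin_mem rfl j))
      fun _ _ hab => hφ (s.orderEmbOfFin_mem rfl _) (s.orderEmbOfFin_mem rfl _)
        ((s.orderEmbOfFin rfl).strictMono hab)
  intro x hx
  obtain ⟨j, rfl⟩ : x ∈ Set.range (s.orderEmbOfFin rfl) := by
    rwa [range_orderEmbOfFin]
  exact congrFun ((comp_enum f hf hfs).trans (comp_enum g hg hgs).symm) j

section Counting

lemma card_filter_apply_lt (σ : Perm (Fin n)) (y : Fin n) :
    #(univ.filter fun x => σ x < y) = y := by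
  rw [← Fin.card_Iio y]
  exact card_equiv σ fun x => by simp

lemma card_filter_apply_le (σ : Perm (Fin n)) (y : Fin n) :
    #(univ.filter fun x => σ x ≤ y) = y + 1 := by
  rw [← Fin.card_Iic y]
  exact card_equiv σ fun x => by simp

lemma le_apply_of_strictMonoOn_compl {σ : Perm (Fin n)} {s : Set (Fin n)}
    (hmono : StrictMonoOn σ sᶜ) (hle : ∀ j ∈ s, σ j ≤ j) {i : Fin n} (hi : i ∉ s) :
    i ≤ σ i := by
  by_contra! hlt
  -- the `σ i + 2` positions `≤ σ i` or `= i` would all carry values `≤ σ i`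
  have hsub : insert i (Iic (σ i)) ⊆ univ.filter fun x => σ x ≤ σ i := by
    intro x hx
    rw [mem_filter]
    refine ⟨mem_univ x, ?_⟩
    rcases mem_insert.1 hx with rfl | hx
    · exact le_rfl
    · rw [mem_Iic] at hx
      by_cases hxs : x ∈ s
      · exact (hle x hxs).trans hx
      · exact (hmono hxs hi (hx.trans_lt hlt)).le
  have hcard := card_le_card hsub
  rw [card_insert_of_notMem (by simpa using hlt), Fin.card_Iic, card_filter_apply_le] at hcard
  omega

end Counting

section Avoidance

variable {σ : Perm (Fin n)}

lemma Avoids321.inv_perm (hσ : Avoids321 σ) : Avoids321 σ⁻¹ := by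
  rintro ⟨i, j, k, hij, hjk, hkj, hji⟩
  exact hσ ⟨σ⁻¹ k, σ⁻¹ j, σ⁻¹ i, hkj, hji, by simpa using hij, by simpa using hjk⟩

lemma Avoids321.apply_lt_apply_of_apply_le (hσ : Avoids321 σ) {i j : Fin n} (hij : i < j)
    (hi : σ i ≤ i) : σ i < σ j := by
  by_contra! hji
  replace hji : σ j < σ i := hji.lt_of_ne (σ.injective.ne hij.ne')
  -- otherwise `j` and the `i` positions before `i` would give `i + 1` values below `σ i`
  obtain ⟨k, hki, hk⟩ : ∃ k < i, σ i < σ k := by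
    by_contra! hsmall
    have hsub : insert j (Iio i) ⊆ univ.filter fun x => σ x < σ i := by
      intro x hx
      rw [mem_filter]
      refine ⟨mem_univ x, ?_⟩
      rcases mem_insert.1 hx with rfl | hx
      · exact hji
      · rw [mem_Iio] at hx
        exact (hsmall x hx).lt_of_ne (σ.injective.ne hx.ne)
    have hcard := card_le_card hsub
    rw [card_insert_of_notMem (by simpa using hij.le), Fin.card_Iio,
      card_filter_apply_lt] at hcard
    have : ((σ i : Fin n) : ℕ) ≤ i := hi
    omega
  exact hσ ⟨k, i, j, hki, hij, hji, hk⟩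

lemma Avoids321.apply_lt_apply_of_le_apply (hσ : Avoids321 σ) {i j : Fin n} (hij : i < j)
    (hj : j ≤ σ j) : σ i < σ j := by
  by_contra! hji
  replace hji : σ j < σ i := hji.lt_of_ne (σ.injective.ne hij.ne')
  have := hσ.inv_perm.apply_lt_apply_of_apply_le hji (by simpa using hj)
  simp only [Perm.coe_inv, symm_apply_apply] at this
  exact this.not_gt hij

lemma Avoids321.strictMonoOn_apply_le (hσ : Avoids321 σ) : StrictMonoOn σ {i | σ i ≤ i} :=
  fun _ hi _ _ hij => hσ.apply_lt_apply_of_apply_le hij hi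

lemma Avoids321.strictMonoOn_le_apply (hσ : Avoids321 σ) : StrictMonoOn σ {i | i ≤ σ i} :=
  fun _ _ _ hj hij => hσ.apply_lt_apply_of_le_apply hij hj

lemma avoids321_of_strictMonoOn {s : Set (Fin n)} (h : StrictMonoOn σ s)
    (hc : StrictMonoOn σ sᶜ) : Avoids321 σ := by
  rintro ⟨i, j, k, hij, hjk, hkj, hji⟩
  have split : ∀ {a b}, a < b → σ b < σ a → (a ∈ s ↔ b ∉ s) := fun hab hba =>
    ⟨fun ha hb => (h ha hb hab).not_gt hba,
     fun hb => by_contra fun ha => (hc ha hb hab).not_gt hba⟩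
  have := split hij hji
  have := split hjk hkj
  have := split (hij.trans hjk) (hkj.trans hji)
  tauto

end Avoidance

section Statistics

variable (σ : Perm (Fin n))

def dropSet : Finset (Fin n) := univ.filter fun i => σ i < i

def fixSet : Finset (Fin n) := univ.filter fun i => σ i = i

lemma card_dropSet : #(dropSet σ) = dropc σ := rfl

lemma exc_add_fixc_add_dropc : exc σ + fixc σ + dropc σ = n := by
  calc exc σ + fixc σ + dropc σ = ∑ _i : Fin n, 1 := by
        simp only [exc, fixc, dropc, card_filter, ← sum_add_distrib]
        refine sum_congr rfl fun i _ => ?_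
        rcases lt_trichotomy i (σ i) with h | h | h
        · simp [h, h.ne', h.not_gt]
        · simp [← h]
        · simp [h, h.ne, h.not_gt]
    _ = n := by simp

lemma exc_inv : exc σ⁻¹ = dropc σ :=
  (card_equiv σ fun i => by simp).symm

lemma fixc_inv : fixc σ⁻¹ = fixc σ :=
  (card_equiv σ fun i => by simp [eq_comm]).symm

lemma inv_inv_perm : inv σ⁻¹ = inv σ :=
  (card_equiv ((prodComm _ _).trans (σ.prodCongr σ)) fun p => by simp [and_comm]).symm

lemma inv_eq_sum_card : inv σ = ∑ j, #(univ.filter fun i => i < j ∧ σ j < σ i) := by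
  simp only [inv, card_filter]
  rw [Fintype.sum_prod_type, sum_comm]

variable {σ}

/-- Truncated subtraction: both sides vanish when `j ≤ σ j`. -/
lemma Avoids321.card_filter_lt_and_apply_gt (hσ : Avoids321 σ) (j : Fin n) :
    #(univ.filter fun i => i < j ∧ σ j < σ i) = j - σ j := by
  rcases le_or_gt j (σ j) with hj | hj
  · rw [Nat.sub_eq_zero_of_le hj, card_eq_zero, filter_eq_empty_iff]
    rintro i - ⟨hij, hji⟩
    exact (hσ.apply_lt_apply_of_le_apply hij hj).not_gt hji
  · have hbelow : (Iio j).filter (fun i => σ i < σ j) = univ.filter fun i => σ i < σ j := by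
      ext i
      simp only [mem_filter, mem_Iio, mem_univ, true_and, and_iff_right_iff_imp]
      intro hi
      by_contra! hji
      rcases hji.eq_or_lt with rfl | hji
      · exact lt_irrefl _ hi
      · exact (hσ.apply_lt_apply_of_apply_le hji hj.le).not_gt hi
    have habove : (Iio j).filter (fun i => ¬ σ i < σ j) =
        univ.filter fun i => i < j ∧ σ j < σ i := by
      ext i
      simp only [mem_filter, mem_Iio, mem_univ, true_and, not_lt, and_congr_right_iff]
      exact fun hij => le_iff_lt_or_eq.trans (or_iff_left (σ.injective.ne hij.ne'))
    have hsplit := card_filter_add_card_filter_not (s := Iio j) (fun i => σ i < σ j)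
    rw [hbelow, habove, card_filter_apply_lt, Fin.card_Iio] at hsplit
    omega

lemma Avoids321.inv_eq_sum (hσ : Avoids321 σ) : inv σ = ∑ j : Fin n, ((j : ℕ) - σ j) := by
  rw [inv_eq_sum_card]
  exact sum_congr rfl fun j _ => hσ.card_filter_lt_and_apply_gt j

end Statistics

section Graphs

/-- `e` is the graph of a strictly increasing bijection between its two projections. -/
def IsStrictMonoGraph (e : Finset (Fin n × Fin n)) : Prop :=
  ∀ x ∈ e, ∀ y ∈ e, x.1 < y.1 ↔ x.2 < y.2

def graphOn (σ : Perm (Fin n)) (P : Finset (Fin n)) : Finset (Fin n × Fin n) :=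
  P.map ⟨fun i => (i, σ i), fun _ _ h => congrArg Prod.fst h⟩

def totalDrop (e : Finset (Fin n × Fin n)) : ℕ := ∑ x ∈ e, ((x.1 : ℕ) - x.2)

variable {σ : Perm (Fin n)} {P : Finset (Fin n)}

@[simp] lemma mem_graphOn {x : Fin n × Fin n} : x ∈ graphOn σ P ↔ x.1 ∈ P ∧ σ x.1 = x.2 := by
  simp only [graphOn, mem_map]
  constructor
  · rintro ⟨i, hi, rfl⟩
    exact ⟨hi, rfl⟩
  · rintro ⟨hx, hσx⟩
    exact ⟨x.1, hx, Prod.ext rfl hσx⟩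

lemma card_graphOn : #(graphOn σ P) = #P := card_map _

lemma image_fst_graphOn : (graphOn σ P).image Prod.fst = P := by
  ext i
  simp

lemma image_snd_graphOn : (graphOn σ P).image Prod.snd = P.image σ := by
  ext v
  simp

lemma Avoids321.totalDrop_graphOn (hσ : Avoids321 σ) (hP : dropSet σ ⊆ P) :
    totalDrop (graphOn σ P) = inv σ := by
  rw [hσ.inv_eq_sum, totalDrop, graphOn, sum_map]
  refine sum_subset (subset_univ P) fun i _ hi => Nat.sub_eq_zero_of_le ?_
  show (i : ℕ) ≤ σ i
  exact not_lt.1 fun h => hi (hP (by simpa [dropSet] using h))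

lemma isStrictMonoGraph_graphOn (h : StrictMonoOn σ P) : IsStrictMonoGraph (graphOn σ P) := by
  intro x hx y hy
  rw [mem_graphOn] at hx hy
  rw [← hx.2, ← hy.2, h.lt_iff_lt hx.1 hy.1]

namespace IsStrictMonoGraph

variable {e : Finset (Fin n × Fin n)} (he : IsStrictMonoGraph e)
include he

lemma eq_of_fst_eq {x y : Fin n × Fin n} (hx : x ∈ e) (hy : y ∈ e) (h : x.1 = y.1) : x = y :=
  Prod.ext h <| le_antisymm
    (not_lt.1 fun hlt => h.not_gt ((he y hy x hx).2 hlt))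
    (not_lt.1 fun hlt => h.not_lt ((he x hx y hy).2 hlt))

lemma eq_of_snd_eq {x y : Fin n × Fin n} (hx : x ∈ e) (hy : y ∈ e) (h : x.2 = y.2) : x = y :=
  he.eq_of_fst_eq hx hy <| le_antisymm
    (not_lt.1 fun hlt => h.not_gt ((he y hy x hx).1 hlt))
    (not_lt.1 fun hlt => h.not_lt ((he x hx y hy).1 hlt))

lemma card_compl_image_snd : #(e.image Prod.snd)ᶜ = #(e.image Prod.fst)ᶜ := by
  rw [card_compl, card_compl, card_image_of_injOn fun x hx y hy => he.eq_of_snd_eq hx hy,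
    card_image_of_injOn fun x hx y hy => he.eq_of_fst_eq hx hy]

def equiv : {i // i ∈ e.image Prod.fst} ≃ {v // v ∈ e.image Prod.snd} :=
  (equivImageOfInjOn e Prod.fst fun _ hx _ hy => he.eq_of_fst_eq hx hy).symm.trans
    (equivImageOfInjOn e Prod.snd fun _ hx _ hy => he.eq_of_snd_eq hx hy)

lemma mk_equiv_mem (i : {i // i ∈ e.image Prod.fst}) : ((i : Fin n), (he.equiv i : Fin n)) ∈ e := by
  set g := equivImageOfInjOn e Prod.fst fun _ hx _ hy => he.eq_of_fst_eq hx hy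
  obtain ⟨x, rfl⟩ := g.surjective i
  have : he.equiv (g x) = equivImageOfInjOn e Prod.snd (fun _ hx _ hy => he.eq_of_snd_eq hx hy) x := by
    simp [equiv, g]
  rw [this]
  exact x.2

def complOrderIso : ↥(e.image Prod.fst)ᶜ ≃o ↥(e.image Prod.snd)ᶜ :=
  ((e.image Prod.fst)ᶜ.orderIsoOfFin rfl).symm.trans
    ((e.image Prod.snd)ᶜ.orderIsoOfFin he.card_compl_image_snd)

def complEquiv : {i // i ∉ e.image Prod.fst} ≃ {v // v ∉ e.image Prod.snd} :=
  (subtypeEquivRight fun _ => mem_compl).symm.trans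
    (he.complOrderIso.toEquiv.trans (subtypeEquivRight fun _ => mem_compl))

/-- The permutation that follows `e` on its first projection and is increasing elsewhere. -/
def perm : Perm (Fin n) := subtypeCongr he.equiv he.complEquiv

lemma perm_apply_of_mem {x : Fin n × Fin n} (hx : x ∈ e) : he.perm x.1 = x.2 := by
  have hi : x.1 ∈ e.image Prod.fst := mem_image_of_mem _ hx
  have hmem := he.mk_equiv_mem ⟨x.1, hi⟩
  have : he.perm x.1 = he.equiv ⟨x.1, hi⟩ := by
    simp only [perm, subtypeCongr, trans_apply, sumCompl_symm_apply_of_pos hi]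
    rfl
  have hsnd := congrArg Prod.snd (he.eq_of_fst_eq hmem hx rfl)
  rw [this]
  exact hsnd

lemma perm_apply_of_notMem {i : Fin n} (hi : i ∉ e.image Prod.fst) :
    he.perm i = he.complOrderIso ⟨i, mem_compl.2 hi⟩ := by
  simp only [perm, subtypeCongr, trans_apply, sumCompl_symm_apply_of_neg hi]
  rfl

lemma perm_apply_notMem_image_snd {i : Fin n} (hi : i ∉ e.image Prod.fst) :
    he.perm i ∉ e.image Prod.snd := by
  rw [he.perm_apply_of_notMem hi]
  exact mem_compl.1 (he.complOrderIso _).2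

lemma strictMonoOn_perm : StrictMonoOn he.perm (e.image Prod.fst) := by
  intro i hi j hj hij
  obtain ⟨x, hx, rfl⟩ := mem_image.1 hi
  obtain ⟨y, hy, rfl⟩ := mem_image.1 hj
  rw [he.perm_apply_of_mem hx, he.perm_apply_of_mem hy]
  exact (he x hx y hy).1 hij

lemma strictMonoOn_perm_compl : StrictMonoOn he.perm (e.image Prod.fst : Set (Fin n))ᶜ := by
  intro i hi j hj hij
  rw [he.perm_apply_of_notMem hi, he.perm_apply_of_notMem hj]
  exact he.complOrderIso.strictMono hij

lemma avoids321_perm : Avoids321 he.perm :=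
  avoids321_of_strictMonoOn he.strictMonoOn_perm he.strictMonoOn_perm_compl

lemma graphOn_perm : graphOn he.perm (e.image Prod.fst) = e := by
  ext x
  rw [mem_graphOn]
  constructor
  · rintro ⟨hx, hσx⟩
    obtain ⟨y, hy, hyx⟩ := mem_image.1 hx
    have hy2 := he.perm_apply_of_mem hy
    rw [hyx, hσx] at hy2
    rwa [← Prod.ext hyx hy2.symm]
  · intro hx
    exact ⟨mem_image_of_mem _ hx, he.perm_apply_of_mem hx⟩

lemma dropSet_perm_subset (hle : ∀ x ∈ e, x.2 ≤ x.1) : dropSet he.perm ⊆ e.image Prod.fst := by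
  intro i hi
  by_contra hi'
  refine (mem_filter.1 hi).2.not_ge (le_apply_of_strictMonoOn_compl he.strictMonoOn_perm_compl
    (fun j hj => ?_) hi')
  obtain ⟨x, hx, rfl⟩ := mem_image.1 hj
  rw [he.perm_apply_of_mem hx]
  exact hle x hx

end IsStrictMonoGraph

lemma Avoids321.perm_graphOn (hσ : Avoids321 σ) (hP : dropSet σ ⊆ P)
    (h : IsStrictMonoGraph (graphOn σ P)) : h.perm = σ := by
  ext1 i
  by_cases hi : i ∈ P
  · exact h.perm_apply_of_mem (x := (i, σ i)) (mem_graphOn.2 ⟨hi, rfl⟩)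
  -- off `P`, both are increasing bijections onto the complement of `σ '' P`
  have hσmono : StrictMonoOn σ (P : Set (Fin n))ᶜ :=
    hσ.strictMonoOn_le_apply.mono fun j hj =>
      not_lt.1 fun hlt => hj (hP (mem_filter.2 ⟨mem_univ j, hlt⟩))
  have hpmono := h.strictMonoOn_perm_compl
  rw [image_fst_graphOn] at hpmono
  refine eqOn_of_strictMonoOn (s := Pᶜ) (t := (P.image σ)ᶜ) ?_ ?_ ?_ ?_ ?_ (mem_compl.2 hi)
  · rw [card_compl, card_compl, card_image_of_injective _ σ.injective]
  · rwa [coe_compl]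
  · rwa [coe_compl]
  · intro j hj
    have := h.perm_apply_notMem_image_snd (by rwa [image_fst_graphOn, ← mem_compl])
    rwa [image_snd_graphOn, ← mem_compl] at this
  · intro j hj
    simp only [coe_compl, Set.mem_compl_iff, mem_coe, mem_image, not_exists, not_and] at hj ⊢
    exact fun k hk hkj => hj (σ.injective hkj ▸ hk)

end Graphs

section Chains

variable {σ : Perm (Fin n)}

def dropChains (n : ℕ) : Finset (Finset (Fin n × Fin n)) :=
  univ.filter fun d => IsStrictMonoGraph d ∧ ∀ x ∈ d, x.2 < x.1

def weakDropChains (n : ℕ) : Finset (Finset (Fin n × Fin n)) :=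
  univ.filter fun w => IsStrictMonoGraph w ∧ ∀ x ∈ w, x.2 ≤ x.1

lemma mem_dropChains {d : Finset (Fin n × Fin n)} :
    d ∈ dropChains n ↔ IsStrictMonoGraph d ∧ ∀ x ∈ d, x.2 < x.1 := by
  simp [dropChains]

lemma mem_weakDropChains {w : Finset (Fin n × Fin n)} :
    w ∈ weakDropChains n ↔ IsStrictMonoGraph w ∧ ∀ x ∈ w, x.2 ≤ x.1 := by
  simp [weakDropChains]

lemma disjoint_dropSet_fixSet : Disjoint (dropSet σ) (fixSet σ) :=
  disjoint_filter.2 fun _ _ hlt heq => hlt.ne heq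

namespace IsStrictMonoGraph

variable {e : Finset (Fin n × Fin n)} (he : IsStrictMonoGraph e)
include he

lemma dropSet_perm (hlt : ∀ x ∈ e, x.2 < x.1) : dropSet he.perm = e.image Prod.fst := by
  refine (he.dropSet_perm_subset fun x hx => (hlt x hx).le).antisymm fun i hi => ?_
  obtain ⟨x, hx, rfl⟩ := mem_image.1 hi
  exact mem_filter.2 ⟨mem_univ _, by rw [he.perm_apply_of_mem hx]; exact hlt x hx⟩

lemma dropSet_union_inter_fixSet_perm (hle : ∀ x ∈ e, x.2 ≤ x.1) :
    dropSet he.perm ∪ (e.image Prod.fst ∩ fixSet he.perm) = e.image Prod.fst := by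
  refine union_subset (he.dropSet_perm_subset hle) inter_subset_left |>.antisymm fun i hi => ?_
  obtain ⟨x, hx, rfl⟩ := mem_image.1 hi
  rcases (he.perm_apply_of_mem hx ▸ hle x hx).lt_or_eq with hlt | heq
  · exact mem_union_left _ (mem_filter.2 ⟨mem_univ _, hlt⟩)
  · exact mem_union_right _ (mem_inter.2 ⟨hi, mem_filter.2 ⟨mem_univ _, heq⟩⟩)

end IsStrictMonoGraph

variable {M : Type*} [AddCommMonoid M]

theorem sum_dropChains (F : Finset (Fin n × Fin n) → M) :
    ∑ σ ∈ univ.filter (fun σ : Perm (Fin n) => Avoids321 σ), F (graphOn σ (dropSet σ)) =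
      ∑ d ∈ dropChains n, F d := by
  refine sum_bij' (fun σ _ => graphOn σ (dropSet σ)) (fun d hd => (mem_dropChains.1 hd).1.perm)
    (fun σ hσ => ?_) (fun d hd => ?_) (fun σ hσ => ?_) (fun d hd => ?_) fun _ _ => rfl
  · refine mem_dropChains.2 ⟨isStrictMonoGraph_graphOn
      ((mem_filter.1 hσ).2.strictMonoOn_apply_le.mono fun i hi => (mem_filter.1 hi).2.le),
      fun x hx => ?_⟩
    rw [mem_graphOn] at hx
    rw [← hx.2]
    exact (mem_filter.1 hx.1).2
  · exact mem_filter.2 ⟨mem_univ _, (mem_dropChains.1 hd).1.avoids321_perm⟩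
  · exact (mem_filter.1 hσ).2.perm_graphOn subset_rfl _
  · obtain ⟨hd, hlt⟩ := mem_dropChains.1 hd
    rw [hd.dropSet_perm hlt, hd.graphOn_perm]

theorem sum_weakDropChains (F : Finset (Fin n × Fin n) → M) :
    ∑ σ ∈ univ.filter (fun σ : Perm (Fin n) => Avoids321 σ),
        ∑ S ∈ (fixSet σ).powerset, F (graphOn σ (dropSet σ ∪ S)) =
      ∑ w ∈ weakDropChains n, F w := by
  rw [sum_sigma']
  refine sum_bij' (fun a _ => graphOn a.1 (dropSet a.1 ∪ a.2))
    (fun w hw => ⟨(mem_weakDropChains.1 hw).1.perm,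
      w.image Prod.fst ∩ fixSet (mem_weakDropChains.1 hw).1.perm⟩)
    (fun a ha => ?_) (fun w hw => ?_) (fun a ha => ?_) (fun w hw => ?_) fun _ _ => rfl
  · simp only [mem_sigma, mem_filter, mem_univ, true_and, mem_powerset] at ha
    rw [mem_weakDropChains]
    have hle : ∀ i ∈ dropSet a.1 ∪ a.2, a.1 i ≤ i := by
      intro i hi
      rcases mem_union.1 hi with hi | hi
      · exact (mem_filter.1 hi).2.le
      · exact (mem_filter.1 (ha.2 hi)).2.le
    refine ⟨isStrictMonoGraph_graphOn (ha.1.strictMonoOn_apply_le.mono hle), fun x hx => ?_⟩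
    rw [mem_graphOn] at hx
    exact hx.2 ▸ hle _ hx.1
  · simp only [mem_sigma, mem_filter, mem_univ, true_and, mem_powerset]
    exact ⟨(mem_weakDropChains.1 hw).1.avoids321_perm, inter_subset_right⟩
  · obtain ⟨σ, S⟩ := a
    simp only [mem_sigma, mem_filter, mem_univ, true_and, mem_powerset] at ha
    rw [ha.1.perm_graphOn subset_union_left, image_fst_graphOn, union_inter_distrib_right]
    dsimp only
    rw [disjoint_iff_inter_eq_empty.1 disjoint_dropSet_fixSet, empty_union, inter_eq_left.2 ha.2]
  · rw [mem_weakDropChains] at hw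
    rw [hw.1.dropSet_union_inter_fixSet_perm hw.2, hw.1.graphOn_perm]

end Chains

section Shift

def shift : Fin n × Fin n ↪ Fin (n + 1) × Fin (n + 1) :=
  ⟨fun x => (x.1.succ, x.2.castSucc), fun x y h => by
    simp only [Prod.mk.injEq, Fin.succ_inj, Fin.castSucc_inj] at h
    exact Prod.ext h.1 h.2⟩

@[simp] lemma shift_apply (x : Fin n × Fin n) : shift x = (x.1.succ, x.2.castSucc) := rfl

lemma isStrictMonoGraph_map_shift_iff {w : Finset (Fin n × Fin n)} :
    IsStrictMonoGraph (w.map shift) ↔ IsStrictMonoGraph w := by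
  simp only [IsStrictMonoGraph, forall_mem_map, shift_apply, Fin.succ_lt_succ_iff,
    Fin.castSucc_lt_castSucc_iff]

lemma map_shift_filter {d : Finset (Fin (n + 1) × Fin (n + 1))} (hd : ∀ x ∈ d, x.2 < x.1) :
    (univ.filter fun x => shift x ∈ d).map shift = d := by
  ext y
  simp only [mem_map, mem_filter, mem_univ, true_and]
  refine ⟨fun ⟨x, hx, hxy⟩ => hxy ▸ hx, fun hy => ?_⟩
  have hlt := hd y hy
  refine ⟨(y.1.pred (Fin.ne_zero_of_lt hlt), y.2.castPred (Fin.ne_last_of_lt hlt)), ?_, ?_⟩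
  all_goals simp only [shift_apply, Fin.succ_pred, Fin.castSucc_castPred, hy]

theorem sum_dropChains_succ {M : Type*} [AddCommMonoid M]
    (F : Finset (Fin (n + 1) × Fin (n + 1)) → M) :
    ∑ w ∈ weakDropChains n, F (w.map shift) = ∑ d ∈ dropChains (n + 1), F d := by
  refine sum_nbij' (fun w => w.map shift) (fun d => univ.filter fun x => shift x ∈ d)
    (fun w hw => ?_) (fun d hd => ?_) (fun w _ => ?_) (fun d hd => ?_) fun _ _ => rfl
  · rw [mem_weakDropChains] at hw
    rw [mem_dropChains, isStrictMonoGraph_map_shift_iff]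
    simp only [forall_mem_map, shift_apply, Fin.castSucc_lt_succ_iff]
    exact hw
  · rw [mem_dropChains] at hd
    rw [mem_weakDropChains, ← isStrictMonoGraph_map_shift_iff, map_shift_filter hd.2]
    refine ⟨hd.1, fun x hx => ?_⟩
    simpa [Fin.castSucc_lt_succ_iff] using hd.2 _ (mem_filter.1 hx).2
  · ext x
    simp
  · exact map_shift_filter (mem_dropChains.1 hd).2

lemma totalDrop_map_shift {w : Finset (Fin n × Fin n)} (hw : w ∈ weakDropChains n) :
    totalDrop (w.map shift) = totalDrop w + #w := by
  rw [totalDrop, totalDrop, sum_map, card_eq_sum_ones, ← sum_add_distrib]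
  refine sum_congr rfl fun x hx => ?_
  have := (mem_weakDropChains.1 hw).2 x hx
  simp only [shift_apply, Fin.val_succ, Fin.val_castSucc]
  omega

end Shift

section GeneratingFunctions

lemma sum_avoids321_inv {M : Type*} [AddCommMonoid M] (f : Perm (Fin n) → M) :
    ∑ σ ∈ univ.filter (fun σ : Perm (Fin n) => Avoids321 σ), f σ⁻¹ =
      ∑ σ ∈ univ.filter (fun σ : Perm (Fin n) => Avoids321 σ), f σ := by
  refine sum_nbij' (·⁻¹) (·⁻¹) (fun σ hσ => ?_) (fun σ hσ => ?_) (fun σ _ => inv_inv σ)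
    (fun σ _ => inv_inv σ) fun _ _ => rfl
  all_goals
    simp only [mem_filter, mem_univ, true_and] at hσ ⊢
    exact hσ.inv_perm

lemma sum_avoids321_eq_sum_dropChains (q t : ℝ) :
    ∑ σ ∈ univ.filter (fun σ : Perm (Fin n) => Avoids321 σ), t ^ (exc σ + fixc σ) * q ^ inv σ =
      ∑ d ∈ dropChains n, t ^ (n - #d) * q ^ totalDrop d := by
  rw [← sum_dropChains]
  refine sum_congr rfl fun σ hσ => ?_
  rw [card_graphOn, card_dropSet, (mem_filter.1 hσ).2.totalDrop_graphOn subset_rfl,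
    Nat.eq_sub_of_add_eq (exc_add_fixc_add_dropc σ)]

lemma mul_sum_avoids321_eq_sum_weakDropChains (q t : ℝ) (ht : t ≠ 0) :
    t ^ (n + 1) * ∑ σ ∈ univ.filter (fun σ : Perm (Fin n) => Avoids321 σ),
        (q / t) ^ exc σ * q ^ inv σ * (1 + q / t) ^ fixc σ =
      ∑ w ∈ weakDropChains n, t ^ (n + 1 - #w) * q ^ (totalDrop w + #w) := by
  rw [← sum_weakDropChains, ← sum_avoids321_inv, mul_sum]
  refine sum_congr rfl fun σ hσ => ?_
  rw [exc_inv, fixc_inv, inv_inv_perm, fixc, add_comm 1, ← sum_pow_mul_eq_add_pow, mul_sum,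
    mul_sum]
  refine sum_congr rfl fun S hS => ?_
  have hdisj : Disjoint (dropSet σ) S :=
    disjoint_dropSet_fixSet.mono_right (mem_powerset.1 hS)
  have hcard := card_le_univ (dropSet σ ∪ S)
  rw [card_union_of_disjoint hdisj, Fintype.card_fin, card_dropSet] at hcard
  obtain ⟨k, hk⟩ := Nat.exists_eq_add_of_le (hcard.trans (n.le_add_right 1))
  rw [card_graphOn, card_union_of_disjoint hdisj, (mem_filter.1 hσ).2.totalDrop_graphOn
    subset_union_left, card_dropSet, hk, Nat.add_sub_cancel_left, one_pow, mul_one, div_pow,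
    div_pow, pow_add, pow_add q]
  field_simp
  ring

end GeneratingFunctions

theorem stmt12 (n : ℕ) (hn : 1 ≤ n) (q t : ℝ) (ht : t ≠ 0) :
    ∑ σ ∈ Finset.univ.filter (fun σ : Equiv.Perm (Fin n) => Avoids321 σ),
        t ^ (exc σ + fixc σ) * q ^ inv σ =
      t ^ n *
        ∑ σ ∈ Finset.univ.filter (fun σ : Equiv.Perm (Fin (n - 1)) => Avoids321 σ),
          (q / t) ^ exc σ * q ^ inv σ * (1 + q / t) ^ fixc σ := by
  obtain ⟨m, rfl⟩ : ∃ m, n = m + 1 := ⟨n - 1, by omega⟩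
  rw [sum_avoids321_eq_sum_dropChains, Nat.add_sub_cancel,
    mul_sum_avoids321_eq_sum_weakDropChains q t ht, ← sum_dropChains_succ]
  refine sum_congr rfl fun w hw => ?_
  rw [card_map, totalDrop_map_shift hw]

end EulerExc
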